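/- arXiv:1410.6590 — 2 statements merged into one kernel-verified Lean document; each statement's English description precedes it below -/
import Mathlib

section
/- (Part of Theorem A.1.8(a)) Let A be a minimal Lanner log canonical system of size n ≥ 4. Then A contains no element of the first kind, i.e. there is no index i with A i i = -1. -/
open Matrix

/-- A real matrix is negative definite: `xᵀ A x < 0` for every nonzero `x`. -/
def NegDefMat {V : Type*} [Fintype V] (A : Matrix V V ℝ) : Prop :=
  ∀ x : V → ℝ, x ≠ 0 → x ⬝ᵥ A.mulVec x < 0

/-- A real matrix is negative semidefinite: `xᵀ A x ≤ 0` for every `x`. -/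
def NegSemidefMat {V : Type*} [Fintype V] (A : Matrix V V ℝ) : Prop :=
  ∀ x : V → ℝ, x ⬝ᵥ A.mulVec x ≤ 0

/-- A real symmetric matrix has at most one positive eigenvalue (with multiplicity). -/
def AtMostOnePosEig {V : Type*} [Fintype V] [DecidableEq V] (A : Matrix V V ℝ) : Prop :=
  ∃ hA : A.IsHermitian, Fintype.card {i // 0 < hA.eigenvalues i} ≤ 1

/-- The real matrix associated to an integer matrix. -/
def matReal {V : Type*} (A : Matrix V V ℤ) : Matrix V V ℝ := A.map Int.cast

/-- An at most hyperbolic system of vectors, encoded by its Gram matrix. -/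
def IsSystem {V : Type*} [Fintype V] [DecidableEq V] (A : Matrix V V ℤ) : Prop :=
  Nonempty V ∧ A.IsSymm ∧ (∀ i, A i i ≤ -1) ∧ (∀ i j, i ≠ j → 0 ≤ A i j) ∧
    AtMostOnePosEig (matReal A)

/-- The graph of a system: an edge between `i ≠ j` iff `A i j > 0`. -/
def sysGraph {V : Type*} (A : Matrix V V ℤ) : SimpleGraph V :=
  SimpleGraph.fromRel fun i j => 0 < A i j

/-- The principal submatrix of `A` on a subset `s` of indices. -/
def subMat {V : Type*} (A : Matrix V V ℤ) (s : Finset V) :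
    Matrix {i // i ∈ s} {i // i ∈ s} ℤ :=
  A.submatrix Subtype.val Subtype.val

/-- A system is elliptic if its Gram matrix is negative definite over `ℝ`. -/
def IsElliptic {V : Type*} [Fintype V] (A : Matrix V V ℤ) : Prop :=
  NegDefMat (matReal A)

/-- A system is hyperbolic if it is not negative semidefinite over `ℝ`. -/
def IsHyperbolic {V : Type*} [Fintype V] (A : Matrix V V ℤ) : Prop :=
  ¬ NegSemidefMat (matReal A)

/-- A system is Lanner if it is hyperbolic but every proper subsystem
is negative semidefinite. -/
def IsLanner {V : Type*} [Fintype V] [DecidableEq V] (A : Matrix V V ℤ) : Prop :=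
  IsHyperbolic A ∧ ∀ s : Finset V, s ≠ Finset.univ → NegSemidefMat (matReal (subMat A s))

/-- A system is connected parabolic if it is negative semidefinite but not negative
definite over `ℝ` and its graph is connected. -/
def IsConnParabolic {V : Type*} [Fintype V] (A : Matrix V V ℤ) : Prop :=
  NegSemidefMat (matReal A) ∧ ¬ NegDefMat (matReal A) ∧ (sysGraph A).Connected

/-- A system is log canonical if for every subset `s` of indices whose principal
submatrix is negative definite, the canonical coefficients `α` (the unique solution of
`∑_{j ∈ s} A i j * α j = -A i i - 2` for `i ∈ s`) satisfy `α i ≥ -1` for all `i ∈ s`,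
with strict inequality whenever `i` is joined, within the graph of `A` restricted to `s`,
to some `e ∈ s` with `A e e = -1`. -/
def IsLogCanonical {V : Type*} [Fintype V] [DecidableEq V] (A : Matrix V V ℤ) : Prop :=
  ∀ s : Finset V, NegDefMat (matReal (subMat A s)) →
    ∀ α : V → ℝ, (∀ i ∈ s, ∑ j ∈ s, (A i j : ℝ) * α j = -(A i i : ℝ) - 2) →
      (∀ i ∈ s, -1 ≤ α i) ∧
      (∀ i e : {x // x ∈ s}, A e.val e.val = -1 →
        ((sysGraph A).comap (Subtype.val : {x // x ∈ s} → V)).Reachable i e →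
        -1 < α i.val)

/-- An index `e` of the first kind (`A e e = -1`) is contractible if every other
index `i` satisfies `A i e = 0`, or `A i i ≤ -2` and `A i e = 1`. -/
def Contractible {V : Type*} (A : Matrix V V ℤ) (e : V) : Prop :=
  ∀ i, i ≠ e → A i e = 0 ∨ (A i i ≤ -2 ∧ A i e = 1)

/-- A log canonical system is minimal if it contains no contractible element
of the first kind. -/
def IsMinimal {V : Type*} (A : Matrix V V ℤ) : Prop :=
  ¬ ∃ e, A e e = -1 ∧ Contractible A e

/-!
Let `e` be of the first kind. As `e` is not contractible, it has a neighbour `i` with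
`a = A i e ≥ 1` such that `a ≥ 2` or `A i i = -1`. The pair `{e, i}` is a proper subsystem, hence
negative semidefinite: `a² + A i i ≤ 0`.

If equality holds, `v = (a, 1)` is a positive null vector of the pair. The graph of a Lanner
system is connected, so some third index `j` has `(A v)_j > 0`, and `γ v + (A v)_j δ_j` with
`γ = -A j j` has square `γ (A v)_j² > 0` although it lives on `{e, i, j}`, a proper subset
as `n ≥ 4`.

Otherwise the pair is elliptic, which forces `A i i ≤ -2` and so `a ≥ 2`. Its canonical coefficient
at `i` is `(-A i i - a - 2) / (a² + A i i)`, and this exceeds `-1` only when `a < 2`, contradicting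
log canonicity.
-/

open Finset

@[simp]
lemma matReal_apply {V : Type*} (A : Matrix V V ℤ) (p q : V) : matReal A p q = A p q := rfl

section
variable {V : Type*} [Fintype V]

lemma dotProduct_mulVec_eq_zero_of_support {M : Matrix V V ℝ} {x y : V → ℝ}
    (h : ∀ p q, x p ≠ 0 → y q ≠ 0 → M p q = 0) : x ⬝ᵥ M *ᵥ y = 0 := by
  simp only [dotProduct, mulVec, Finset.mul_sum]
  refine sum_eq_zero fun p _ => sum_eq_zero fun q _ => ?_
  by_cases hx : x p = 0
  · simp only [hx, zero_mul]
  by_cases hy : y q = 0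
  · simp [hy]
  simp [h p q hx hy]

lemma dotProduct_mulVec_of_support_pair [DecidableEq V] {M : Matrix V V ℝ} {e i : V}
    (hei : e ≠ i) {w : V → ℝ} (hw : ∀ p ∉ ({e, i} : Finset V), w p = 0) :
    w ⬝ᵥ M *ᵥ w = w e ^ 2 * M e e + w e * w i * (M e i + M i e) + w i ^ 2 * M i i := by
  have hsum : ∀ f : V → ℝ, (∀ p ∉ ({e, i} : Finset V), f p = 0) → ∑ p, f p = f e + f i :=
    fun f hf => (sum_subset (subset_univ _) fun p _ hp => hf p hp).symm.trans (sum_pair hei)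
  simp only [dotProduct, mulVec]
  rw [hsum _ fun p hp => by simp [hw p hp], hsum _ fun p hp => by simp [hw p hp],
    hsum _ fun p hp => by simp [hw p hp]]
  ring

lemma dotProduct_mulVec_subMat (A : Matrix V V ℤ) (s : Finset V) {w : V → ℝ}
    (hw : ∀ p ∉ s, w p = 0) :
    (fun p : s => w p) ⬝ᵥ matReal (subMat A s) *ᵥ (fun p : s => w p) =
      w ⬝ᵥ matReal A *ᵥ w := by
  have hsum : ∀ f : V → ℝ, (∀ p ∉ s, f p = 0) → ∑ p : s, f p = ∑ p, f p :=
    fun f hf => (sum_coe_sort s f).trans (sum_subset (subset_univ s) fun p _ hp => hf p hp)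
  simp only [dotProduct, mulVec, subMat, matReal_apply, submatrix_apply]
  rw [← hsum _ fun p hp => by simp [hw p hp]]
  exact Fintype.sum_congr _ _ fun p =>
    congrArg (w p * ·) (hsum (fun q => (A p q : ℝ) * w q) fun q hq => by simp [hw q hq])

end

section
variable {V : Type*} [Fintype V] [DecidableEq V] {A : Matrix V V ℤ} {e i : V}

theorem IsLanner.dotProduct_mulVec_nonpos (hlan : IsLanner A) {s : Finset V} (hs : s ≠ univ)
    {w : V → ℝ} (hw : ∀ p ∉ s, w p = 0) : w ⬝ᵥ matReal A *ᵥ w ≤ 0 := by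
  rw [← dotProduct_mulVec_subMat A s hw]
  exact hlan.2 s hs _

theorem IsLanner.exists_pos_cross_entry (hsys : IsSystem A) (hlan : IsLanner A) {s : Finset V}
    (hs : s.Nonempty) (hs' : s ≠ univ) : ∃ p ∈ s, ∃ q ∉ s, 0 < A q p := by
  by_contra! h
  obtain ⟨-, hsymm, -, hoff, -⟩ := hsys
  have hzero : ∀ p q, (p ∈ s ↔ q ∉ s) → matReal A p q = 0 := by
    intro p q hpq
    by_cases hp : p ∈ s
    · have hq := hpq.1 hp
      have := hoff q p (ne_of_mem_of_not_mem hp hq).symm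
      simp [← hsymm.apply p q, le_antisymm (h p hp q hq) this]
    · have hq : q ∈ s := not_not.1 (mt hpq.2 hp)
      simp [le_antisymm (h q hq p hp) (hoff p q (ne_of_mem_of_not_mem hq hp).symm)]
  refine hlan.1 fun x => ?_
  set x₁ : V → ℝ := fun p => if p ∈ s then x p else 0
  set x₂ : V → ℝ := fun p => if p ∈ s then 0 else x p
  have hx : x = x₁ + x₂ := funext fun p => by by_cases hp : p ∈ s <;> simp [x₁, x₂, hp]
  have hx₁ : ∀ p, x₁ p ≠ 0 → p ∈ s := fun p hp => by_contra fun h => hp (if_neg h)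
  have hx₂ : ∀ p, x₂ p ≠ 0 → p ∉ s := fun p hp h => hp (if_pos h)
  have h₁₂ : x₁ ⬝ᵥ matReal A *ᵥ x₂ = 0 := dotProduct_mulVec_eq_zero_of_support fun p q hp hq =>
    hzero p q ⟨fun _ => hx₂ q hq, fun _ => hx₁ p hp⟩
  have h₂₁ : x₂ ⬝ᵥ matReal A *ᵥ x₁ = 0 := dotProduct_mulVec_eq_zero_of_support fun p q hp hq =>
    hzero p q ⟨fun h => absurd h (hx₂ p hp), fun h => absurd (hx₁ q hq) h⟩
  have h₁ := hlan.dotProduct_mulVec_nonpos hs' (w := x₁) fun p hp => if_neg hp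
  have h₂ := hlan.dotProduct_mulVec_nonpos ((compl_ne_univ_iff_nonempty s).2 hs) (w := x₂)
    fun p hp => if_pos (notMem_compl.1 hp)
  rw [hx, mulVec_add, dotProduct_add, add_dotProduct, add_dotProduct, h₁₂, h₂₁]
  linarith

theorem IsLanner.false_of_pos_null_vector (hsys : IsSystem A) (hlan : IsLanner A) {s : Finset V}
    (hs : s.Nonempty) (hcard : #s + 2 ≤ Fintype.card V) {v : V → ℝ}
    (hpos : ∀ p ∈ s, 0 < v p) (hsupp : ∀ p ∉ s, v p = 0)
    (hnull : ∀ p ∈ s, (matReal A *ᵥ v) p = 0) : False := by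
  obtain ⟨p, hp, j, hj, hjp⟩ :=
    hlan.exists_pos_cross_entry hsys hs ((card_lt_iff_ne_univ s).1 (by omega))
  obtain ⟨-, hsymm, hdiag, hoff, -⟩ := hsys
  set C := (matReal A *ᵥ v) j
  have hC : 0 < C := by
    refine (mul_pos (Int.cast_pos.2 hjp) (hpos p hp)).trans_le
      (single_le_sum (f := fun q => (A j q : ℝ) * v q) (fun q _ => ?_) (mem_univ p))
    by_cases hq : q ∈ s
    · exact mul_nonneg (Int.cast_nonneg (hoff j q (ne_of_mem_of_not_mem hq hj).symm))
        (hpos q hq).le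
    · simp [hsupp q hq]
  set γ := -(A j j : ℝ) with hγdef
  have hγ : 0 < γ := by
    have : (A j j : ℝ) ≤ -1 := by exact_mod_cast hdiag j
    linarith
  have hvv : v ⬝ᵥ matReal A *ᵥ v = 0 := sum_eq_zero fun q _ => by
    by_cases hq : q ∈ s
    · simp [hnull q hq]
    · simp [hsupp q hq]
  have hvj : v ⬝ᵥ (matReal A).col j = C := by
    have hM : (matReal A)ᵀ = matReal A := hsymm.map _
    rw [← mulVec_single_one, dotProduct_mulVec, ← mulVec_transpose, hM, dotProduct_single_one]
  have hw := hlan.dotProduct_mulVec_nonpos (s := insert j s)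
    ((card_lt_iff_ne_univ _).1 ((card_insert_le j s).trans_lt (by omega)))
    (w := γ • v + C • Pi.single j 1) fun q hq => by
      rw [mem_insert, not_or] at hq
      simp [hsupp q hq.2, hq.1]
  simp only [mulVec_add, mulVec_smul, dotProduct_add, add_dotProduct, dotProduct_smul,
    smul_dotProduct, hvv, hvj, single_one_dotProduct, mulVec_single_one, col_apply,
    matReal_apply, smul_eq_mul] at hw
  change γ * (γ * 0 + C * C) + C * (γ * C + C * A j j) ≤ 0 at hw
  nlinarith [mul_pos hγ (mul_pos hC hC), hγdef]

theorem IsLanner.sq_add_nonpos (hsymm : A.IsSymm) (hlan : IsLanner A)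
    (hcard : 2 < Fintype.card V) (he : A e e = -1) (hie : i ≠ e) : A i e ^ 2 + A i i ≤ 0 := by
  have hw : ∀ p ∉ ({e, i} : Finset V), (Pi.single e (A i e : ℝ) + Pi.single i 1 : V → ℝ) p = 0 :=
    fun p hp => by
      rw [mem_insert, mem_singleton, not_or] at hp
      simp [hp.1, hp.2]
  have h := hlan.dotProduct_mulVec_nonpos
    ((card_lt_iff_ne_univ _).1 ((card_le_two (a := e) (b := i)).trans_lt hcard)) hw
  rw [dotProduct_mulVec_of_support_pair hie.symm hw] at h
  simp only [Pi.add_apply, Pi.single_eq_same, Pi.single_eq_of_ne hie, Pi.single_eq_of_ne hie.symm,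
    add_zero, zero_add, matReal_apply, he, hsymm.apply i e] at h
  have h' : ((A i e ^ 2 + A i i : ℤ) : ℝ) ≤ 0 := by push_cast at h ⊢; linarith
  exact_mod_cast h'

theorem IsLanner.false_of_sq_add_eq_zero (hsys : IsSystem A) (hlan : IsLanner A)
    (hcard : 4 ≤ Fintype.card V) (he : A e e = -1) (hie : i ≠ e) (hpos : 0 < A i e)
    (h : A i e ^ 2 + A i i = 0) : False := by
  refine hlan.false_of_pos_null_vector hsys (s := {e, i}) (insert_nonempty _ _)
    (by have := card_le_two (a := e) (b := i); omega)
    (v := (Pi.single e (A i e : ℝ) + Pi.single i 1 : V → ℝ)) ?_ ?_ ?_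
  · simp [hie, hie.symm, hpos]
  · intro p hp
    rw [mem_insert, mem_singleton, not_or] at hp
    simp [hp.1, hp.2]
  · have h' : (A i e : ℝ) * A i e + A i i = 0 := by exact_mod_cast (sq (A i e)) ▸ h
    simp [mulVec_add, he, hsys.2.1.apply i e, h']

theorem negDefMat_subMat_pair (hsymm : A.IsSymm) (he : A e e = -1) (hie : i ≠ e)
    (hdet : A i e ^ 2 + A i i < 0) : NegDefMat (matReal (subMat A {e, i})) := by
  intro x hx
  set w : V → ℝ := fun p => if h : p ∈ ({e, i} : Finset V) then x ⟨p, h⟩ else 0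
  have hw : ∀ p ∉ ({e, i} : Finset V), w p = 0 := fun p hp => dif_neg hp
  have hxw : x = fun p : ({e, i} : Finset V) => w p :=
    funext fun p => by simp only [w, dif_pos p.2]
  have hwne : w e ≠ 0 ∨ w i ≠ 0 := by
    by_contra! h
    refine hx (funext fun ⟨p, hp⟩ => ?_)
    rw [mem_insert, mem_singleton] at hp
    rcases hp with rfl | rfl
    · simpa [w] using h.1
    · simpa [w] using h.2
  have hdet' : (A i e : ℝ) ^ 2 + A i i < 0 := by exact_mod_cast hdet
  rw [hxw, dotProduct_mulVec_subMat A _ hw, dotProduct_mulVec_of_support_pair hie.symm hw]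
  simp only [matReal_apply, he, hsymm.apply i e, Int.cast_neg, Int.cast_one]
  by_cases hi : w i = 0
  · have he0 : w e ≠ 0 := hwne.resolve_right (not_not.2 hi)
    simpa [hi] using sq_pos_of_ne_zero he0
  · nlinarith [sq_nonneg (w e - A i e * w i), mul_neg_of_neg_of_pos hdet' (sq_pos_of_ne_zero hi)]

theorem IsLogCanonical.lt_two_of_sq_add_neg (hsymm : A.IsSymm) (hlc : IsLogCanonical A)
    (he : A e e = -1) (hie : i ≠ e) (hpos : 0 < A i e) (hdet : A i e ^ 2 + A i i < 0) :
    A i e < 2 := by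
  have hdet' : (A i e : ℝ) ^ 2 + A i i < 0 := by exact_mod_cast hdet
  set t : ℝ := (-A i i - A i e - 2) / ((A i e : ℝ) ^ 2 + A i i) with ht
  have ht' : ((A i e : ℝ) ^ 2 + A i i) * t = -A i i - A i e - 2 := mul_div_cancel₀ _ hdet'.ne
  set α : V → ℝ := fun p => if p = i then t else A i e * t + 1
  have hα : ∀ p ∈ ({e, i} : Finset V), ∑ q ∈ {e, i}, (A p q : ℝ) * α q = -(A p p : ℝ) - 2 := by
    simp only [mem_insert, mem_singleton, forall_eq_or_imp, forall_eq, sum_pair hie.symm]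
    constructor
    · simp only [α, if_neg hie.symm, if_pos rfl, he, hsymm.apply i e]
      push_cast
      ring
    · simp only [α, if_neg hie.symm, if_pos rfl]
      linear_combination ht'
  have hreach : ((sysGraph A).comap Subtype.val).Reachable
      (⟨i, by simp⟩ : ({e, i} : Finset V)) ⟨e, by simp⟩ :=
    SimpleGraph.Adj.reachable (by simp [sysGraph, hie, hpos])
  have h := (hlc _ (negDefMat_subMat_pair hsymm he hie hdet) α hα).2 _ _ he hreach
  simp only [α, if_pos rfl] at h
  rw [ht, lt_div_iff_of_neg hdet'] at h
  have : (A i e : ℝ) < 2 := by nlinarith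
  exact_mod_cast this

end

/-- Part of Theorem A.1.8(a): a minimal Lanner log canonical system of size `n ≥ 4`
contains no element of the first kind. -/
theorem lanner_minimal_no_first_kind {n : ℕ} (hn : 4 ≤ n)
    (A : Matrix (Fin n) (Fin n) ℤ) (hsys : IsSystem A) (hlan : IsLanner A)
    (hlc : IsLogCanonical A) (hmin : IsMinimal A) :
    ¬ ∃ i, A i i = -1 := by
  rintro ⟨e, he⟩
  obtain ⟨i, hie, hne, hkind⟩ : ∃ i, i ≠ e ∧ A i e ≠ 0 ∧ (A i i ≤ -2 → A i e ≠ 1) := by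
    simpa [Contractible] using fun hc => hmin ⟨e, he, hc⟩
  have hcard : 4 ≤ Fintype.card (Fin n) := by simpa using hn
  have hsymm : A.IsSymm := hsys.2.1
  have hpos : 0 < A i e := (hsys.2.2.2.1 i e hie).lt_of_ne' hne
  rcases (hlan.sq_add_nonpos hsymm (by omega) he hie).lt_or_eq with hdet | hdet
  · have hlt := hlc.lt_two_of_sq_add_neg hsymm he hie hpos hdet
    exact hkind (by nlinarith) (by omega)
  · exact hlan.false_of_sq_add_eq_zero hsys hcard he hie hpos hdet
end

section
/- Let A be a connected parabolic system of size n ≥ 2. Then every proper subsystem of A is elliptic: for every nonempty proper subset s ⊊ Fin n, the principal submatrix of A on s is negative definite over ℝ. -/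
/-!
Extend `x` by zero to a vector `x'` on all indices; its quadratic form is that of `x` on the
subsystem, so if it is nonnegative it vanishes by semidefiniteness. Since off-diagonal entries are
nonnegative, `|x'|` does at least as well, so `|x'|` is a nonnegative null vector of the form, hence
lies in the kernel. At a zero of a nonnegative kernel vector every neighbour must vanish too, so by
connectedness `|x'|` vanishes everywhere, since it vanishes outside the proper subset.
-/

open Matrix

open Function

section ExtendByZero

variable {m n R : Type*} [Fintype m] [Fintype n] [NonUnitalNonAssocSemiring R]
  {e : m → n}

theorem extend_zero_dotProduct (he : Injective e) (x : m → R) (g : n → R) :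
    extend e x 0 ⬝ᵥ g = x ⬝ᵥ (g ∘ e) :=
  (Fintype.sum_of_injective e he _ _ (fun i hi => by simp [extend_apply' _ _ _ hi])
    (fun a => by simp [he.extend_apply])).symm

theorem dotProduct_extend_zero (he : Injective e) (g : n → R) (x : m → R) :
    g ⬝ᵥ extend e x 0 = (g ∘ e) ⬝ᵥ x :=
  (Fintype.sum_of_injective e he _ _ (fun i hi => by simp [extend_apply' _ _ _ hi])
    (fun a => by simp [he.extend_apply])).symm

theorem extend_zero_dotProduct_mulVec_extend_zero (he : Injective e) (M : Matrix n n R)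
    (x : m → R) : extend e x 0 ⬝ᵥ M *ᵥ extend e x 0 = x ⬝ᵥ M.submatrix e e *ᵥ x := by
  rw [extend_zero_dotProduct he]
  congr 1
  ext a
  exact dotProduct_extend_zero he (M (e a)) x

end ExtendByZero

section OffDiagonalNonneg

variable {V R : Type*} [Fintype V] [CommRing R] [LinearOrder R] [IsStrictOrderedRing R]
  {M : Matrix V V R}

theorem dotProduct_mulVec_le_abs (hoff : ∀ i j, i ≠ j → 0 ≤ M i j) (x : V → R) :
    x ⬝ᵥ M *ᵥ x ≤ |x| ⬝ᵥ M *ᵥ |x| := by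
  simp only [dotProduct, mulVec, Finset.mul_sum, Pi.abs_apply]
  refine Finset.sum_le_sum fun i _ => Finset.sum_le_sum fun j _ => ?_
  rcases eq_or_ne i j with rfl | hij
  · exact le_of_eq (by linear_combination M i i * (abs_mul_abs_self (x i)).symm)
  · calc x i * (M i j * x j) = M i j * (x i * x j) := by ring
      _ ≤ M i j * (|x i| * |x j|) :=
        mul_le_mul_of_nonneg_left ((le_abs_self _).trans (abs_mul _ _).le) (hoff i j hij)
      _ = |x i| * (M i j * |x j|) := by ring

theorem apply_eq_zero_of_mulVec_eq_zero (hoff : ∀ i j, i ≠ j → 0 ≤ M i j) {y : V → R}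
    (hy : 0 ≤ y) (hMy : M *ᵥ y = 0) {i j : V} (hij : 0 < M i j) (hyi : y i = 0) : y j = 0 := by
  classical
  have hterm : ∀ k ∈ Finset.univ, 0 ≤ M i k * y k := fun k _ => by
    rcases eq_or_ne i k with rfl | hik
    · simp [hyi]
    · exact mul_nonneg (hoff i k hik) (hy k)
  have hsum : ∑ k, M i k * y k = 0 := congrFun hMy i
  have := (Finset.sum_eq_zero_iff_of_nonneg hterm).mp hsum j (Finset.mem_univ j)
  exact (mul_eq_zero.mp this).resolve_left hij.ne'

theorem eq_zero_of_mulVec_eq_zero_of_preconnected {G : SimpleGraph V} (hG : G.Preconnected)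
    (hadj : ∀ i j, G.Adj i j → 0 < M i j) (hoff : ∀ i j, i ≠ j → 0 ≤ M i j) {y : V → R}
    (hy : 0 ≤ y) (hMy : M *ᵥ y = 0) {i : V} (hyi : y i = 0) : y = 0 := by
  funext j
  obtain ⟨w⟩ := hG i j
  induction w with
  | nil => exact hyi
  | cons h _ ih => exact ih (apply_eq_zero_of_mulVec_eq_zero hoff hy hMy (hadj _ _ h) hyi)

end OffDiagonalNonneg

section NegSemidef

variable {V : Type*} [Fintype V] {M : Matrix V V ℝ}

theorem NegSemidefMat.mulVec_eq_zero (hM : NegSemidefMat M) (hH : M.IsHermitian) {x : V → ℝ}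
    (hx : x ⬝ᵥ M *ᵥ x = 0) : M *ᵥ x = 0 := by
  have hpsd : (-M).PosSemidef :=
    .of_dotProduct_mulVec_nonneg hH.neg fun z => by simpa [neg_mulVec] using hM z
  simpa [neg_mulVec] using (hpsd.dotProduct_mulVec_zero_iff x).mp (by simp [neg_mulVec, hx])

theorem NegSemidefMat.eq_zero_of_apply_eq_zero (hM : NegSemidefMat M) (hH : M.IsHermitian)
    (hoff : ∀ i j, i ≠ j → 0 ≤ M i j) {G : SimpleGraph V} (hG : G.Preconnected)
    (hadj : ∀ i j, G.Adj i j → 0 < M i j) {x : V → ℝ} (hx : 0 ≤ x ⬝ᵥ M *ᵥ x) {i : V}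
    (hxi : x i = 0) : x = 0 := by
  have habs : |x| ⬝ᵥ M *ᵥ |x| = 0 :=
    le_antisymm (hM _) (hx.trans (dotProduct_mulVec_le_abs hoff x))
  have := eq_zero_of_mulVec_eq_zero_of_preconnected hG hadj hoff (abs_nonneg x)
    (hM.mulVec_eq_zero hH habs) (i := i) (by simp [hxi])
  exact funext fun j => abs_eq_zero.mp (congrFun this j)

end NegSemidef

section Systems

variable {V : Type*} {A : Matrix V V ℤ}

@[simp]
theorem matReal_apply_s17 (i j : V) : matReal A i j = A i j :=
  rfl

theorem isHermitian_matReal (hA : A.IsSymm) : (matReal A).IsHermitian := by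
  ext i j
  simpa using congrFun (congrFun hA i) j

theorem matReal_subMat (s : Finset V) :
    matReal (subMat A s) = (matReal A).submatrix Subtype.val Subtype.val :=
  rfl

theorem matReal_apply_pos_of_adj (hA : A.IsSymm) {i j : V} (h : (sysGraph A).Adj i j) :
    0 < matReal A i j := by
  have hji : A j i = A i j := by simpa using congrFun (congrFun hA i) j
  obtain ⟨-, h | h⟩ := h
  · simpa using h
  · simpa [← hji] using h

end Systems

theorem connParabolic_proper_subsystems_elliptic_general {n : ℕ}
    (A : Matrix (Fin n) (Fin n) ℤ) (hsys : IsSystem A) (hpar : IsConnParabolic A) :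
    ∀ s : Finset (Fin n), s.Nonempty → s ≠ Finset.univ →
      NegDefMat (matReal (subMat A s)) := by
  obtain ⟨-, hsymm, -, hoff, -⟩ := hsys
  obtain ⟨hnsd, -, hconn⟩ := hpar
  intro s _ hs x hx
  by_contra! hpos
  obtain ⟨i, hi⟩ : ∃ i, i ∉ s := by simpa [Finset.eq_univ_iff_forall] using hs
  have hzero : extend Subtype.val x 0 = 0 := by
    refine hnsd.eq_zero_of_apply_eq_zero (isHermitian_matReal hsymm)
      (fun i j hij => by simpa using hoff i j hij) hconn.preconnected
      (fun _ _ => matReal_apply_pos_of_adj hsymm) ?_ (i := i) ?_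
    · rwa [extend_zero_dotProduct_mulVec_extend_zero Subtype.val_injective, ← matReal_subMat]
    · exact extend_apply' _ _ _ (by simpa using hi)
  refine hx (funext fun a => ?_)
  simpa [Subtype.val_injective.extend_apply] using congrFun hzero a.val

/-- Every proper subsystem of a connected parabolic system of size `n ≥ 2` is elliptic. -/
theorem connParabolic_proper_subsystems_elliptic {n : ℕ} (hn : 2 ≤ n)
    (A : Matrix (Fin n) (Fin n) ℤ) (hsys : IsSystem A) (hpar : IsConnParabolic A) :
    ∀ s : Finset (Fin n), s.Nonempty → s ≠ Finset.univ →
      NegDefMat (matReal (subMat A s)) :=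
  connParabolic_proper_subsystems_elliptic_general A hsys hpar
end
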